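/- arXiv:math/0212334 — 4 statements merged into one kernel-verified Lean document; each statement's English description precedes it below -/
import Mathlib

section
/- Any finite collection of pairwise commuting invertible complex n×n matrices M₁, …, M_k admits pairwise commuting matrices A₁, …, A_k with exp(2πi A_j) = M_j for each j. -/
open scoped BigOperators

noncomputable section

/-- A point of `ℂ^m`. -/
abbrev Pt (m : ℕ) := Fin m → ℂ

/-- A scalar `k`-form on (an open subset of) `ℂ^m`, represented by its coefficient
functions in the antisymmetric representation. -/
def Form (m k : ℕ) := Pt m → (Fin k → Fin m) → ℂ

namespace Form

/-- Exterior derivative, coefficientwise via `fderiv`. -/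
def d {m k : ℕ} (ω : Form m k) : Form m (k + 1) := fun x idx =>
  ∑ j : Fin (k + 1),
    (-1 : ℂ) ^ (j : ℕ) *
      fderiv ℂ (fun y => ω y fun a => idx (j.succAbove a)) x (Pi.single (idx j) 1)

/-- Exterior differential of a function (`0`-form). -/
def dFun {m : ℕ} (g : Pt m → ℂ) : Form m 1 :=
  Form.d (fun x (_ : Fin 0 → Fin m) => g x)

/-- Wedge product (with the standard normalization). -/
def wedge {m k l : ℕ} (α : Form m k) (β : Form m l) : Form m (k + l) := fun x idx =>
  ((k.factorial * l.factorial : ℂ))⁻¹ *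
    ∑ σ : Equiv.Perm (Fin (k + l)),
      ((Equiv.Perm.sign σ : ℤ) : ℂ) *
        (α x fun a => idx (σ (Fin.castAdd l a))) *
        (β x fun b => idx (σ (Fin.natAdd k b)))

/-- Wedge with a `1`-form on the left. -/
def oneWedge {m k : ℕ} (α : Form m 1) (ω : Form m k) : Form m (k + 1) := fun x idx =>
  ∑ j : Fin (k + 1),
    (-1 : ℂ) ^ (j : ℕ) * α x (fun _ => idx j) * ω x fun a => idx (j.succAbove a)

/-- Wedge with a `1`-form on the right. -/
def wedgeOne {m k : ℕ} (ω : Form m k) (α : Form m 1) : Form m (k + 1) := fun x idx =>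
  (-1 : ℂ) ^ k * oneWedge α ω x idx

/-- Holomorphy of a form on a set: every coefficient function is holomorphic there. -/
def IsHolomorphicOn {m k : ℕ} (ω : Form m k) (U : Set (Pt m)) : Prop :=
  ∀ idx, DifferentiableOn ℂ (fun x => ω x idx) U

end Form

/-- `∇ = d - α ∧ ·`, the covariant derivative attached to a scalar `1`-form `α`. -/
def nabla {m k : ℕ} (α : Form m 1) (ω : Form m k) : Form m (k + 1) := fun x idx =>
  Form.d ω x idx - Form.oneWedge α ω x idx

/-- Matrix-valued `k`-forms on `ℂ^m`. -/
def MForm (n m k : ℕ) := Fin n → Fin n → Form m k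

namespace MForm

def d {n m k : ℕ} (Ω : MForm n m k) : MForm n m (k + 1) := fun p q => Form.d (Ω p q)

def wedge {n m k l : ℕ} (Ω : MForm n m k) (Θ : MForm n m l) : MForm n m (k + l) :=
  fun p q x idx => ∑ r, Form.wedge (Ω p r) (Θ r q) x idx

def IsHolomorphicOn {n m k : ℕ} (Ω : MForm n m k) (U : Set (Pt m)) : Prop :=
  ∀ p q, Form.IsHolomorphicOn (Ω p q) U

/-- The matrix `0`-form attached to a matrix-valued function. -/
def ofFun {n m : ℕ} (X : Pt m → Matrix (Fin n) (Fin n) ℂ) : MForm n m 0 :=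
  fun p q x _ => X x p q

end MForm

/-- `ω` has (at most) a logarithmic pole on `Σ = {f = 0}` inside `U`:
`ω` is holomorphic off `Σ`, and both `f·ω` and `f·dω` extend holomorphically to `U`. -/
def HasLogPole {m k : ℕ} (U : Set (Pt m)) (f : Pt m → ℂ) (ω : Form m k) : Prop :=
  Form.IsHolomorphicOn ω (U \ {x | f x = 0}) ∧
  (∃ g : Form m k, Form.IsHolomorphicOn g U ∧
      ∀ x ∈ U \ {x | f x = 0}, ∀ idx, g x idx = f x * ω x idx) ∧
  (∃ h : Form m (k + 1), Form.IsHolomorphicOn h U ∧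
      ∀ x ∈ U \ {x | f x = 0}, ∀ idx, h x idx = f x * Form.d ω x idx)

/-- Standing assumption on the (square-free) local equation `f` of the hypersurface
`Σ = {f = 0}`: the smooth points of `Σ` are dense in it (the non-smooth locus is small). -/
def SmoothPointsDense {m : ℕ} (U : Set (Pt m)) (f : Pt m → ℂ) : Prop :=
  ∀ x ∈ U, f x = 0 → ∀ V ∈ nhds x, ∃ y ∈ V ∩ U, f y = 0 ∧ fderivWithin ℂ f U y ≠ 0

/-!
All the `M j` and their inverses generate a commutative subalgebra `S`, and it suffices to show
that every unit of `S` is an exponential of an element of `S`. In a commutative Banach algebra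
`exp` is a homomorphism from the additive group to the units, and by the inverse function theorem
its range is a neighbourhood of `1`; hence the range is an open subgroup of the units, and so also
relatively closed in them. In a finite-dimensional complex algebra the units are connected: the
complex line through `1` and a unit `u` meets the non-units only at the finitely many points
`(1 - λ)⁻¹`, `λ ∈ σ(u)`, and a plane minus finitely many points is connected.
-/

open NormedSpace Topology Filter

section CommBanachAlgebra

variable {𝔸 : Type*} [NormedCommRing 𝔸] [NormedAlgebra ℚ 𝔸] [CompleteSpace 𝔸]

theorem range_exp_mem_nhds_one : Set.range (exp : 𝔸 → 𝔸) ∈ 𝓝 1 := by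
  have h := (hasStrictFDerivAt_exp_zero_of_radius_pos (𝕂 := ℚ) (𝔸 := 𝔸)
    (by simp [expSeries_radius_eq_top])).map_nhds_eq_of_equiv
      (f' := ContinuousLinearEquiv.refl ℚ 𝔸)
  rw [exp_zero] at h
  rw [← h]
  exact mem_map.2 (by simp)

theorem image_mul_range_exp_mem_nhds {y : 𝔸} (hy : IsUnit y) :
    (y * ·) '' Set.range exp ∈ 𝓝 y := by
  obtain ⟨u, rfl⟩ := hy
  have hc : Tendsto (fun z => (↑u⁻¹ : 𝔸) * z) (𝓝 ↑u) (𝓝 1) := by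
    simpa using (continuous_const_mul (↑u⁻¹ : 𝔸)).tendsto (u : 𝔸)
  filter_upwards [hc range_exp_mem_nhds_one] with z hz
  exact ⟨_, hz, by simp⟩

theorem mem_range_exp_of_isUnit (hU : IsPreconnected {x : 𝔸 | IsUnit x}) {u : 𝔸}
    (hu : IsUnit u) : u ∈ Set.range exp := by
  have hE : Set.range exp ⊆ interior (Set.range (exp : 𝔸 → 𝔸)) := by
    rintro _ ⟨a, rfl⟩
    refine mem_interior_iff_mem_nhds.2
      (mem_of_superset (image_mul_range_exp_mem_nhds (isUnit_exp a)) ?_)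
    rintro _ ⟨_, ⟨b, rfl⟩, rfl⟩
    exact ⟨a + b, exp_add⟩
  have hF : {x | IsUnit x} \ Set.range exp ⊆ interior (Set.range (exp : 𝔸 → 𝔸))ᶜ := by
    rintro y ⟨hy, hyE⟩
    refine mem_interior_iff_mem_nhds.2 (mem_of_superset (image_mul_range_exp_mem_nhds hy) ?_)
    rintro _ ⟨_, ⟨b, rfl⟩, rfl⟩ ⟨c, hc⟩
    refine hyE ⟨c - b, ?_⟩
    rw [sub_eq_add_neg, exp_add, hc, mul_assoc, ← exp_add, add_neg_cancel, exp_zero, mul_one]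
  have hsplit : {x : 𝔸 | IsUnit x} ⊆ interior (Set.range exp) ∪ interior (Set.range exp)ᶜ := by
    intro x hx
    by_cases hxE : x ∈ Set.range exp
    exacts [Or.inl (hE hxE), Or.inr (hF ⟨hx, hxE⟩)]
  have hdisj : interior (Set.range (exp : 𝔸 → 𝔸)) ∩ interior (Set.range exp)ᶜ = ∅ :=
    Set.disjoint_iff_inter_eq_empty.1 <|
      disjoint_compl_right.mono interior_subset interior_subset
  rcases isPreconnected_iff_subset_of_disjoint.1 hU _ _ isOpen_interior isOpen_interior hsplit
    (by rw [hdisj, Set.inter_empty]) with h | h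
  · exact interior_subset (h hu)
  · exact (interior_subset (h isUnit_one) ⟨0, exp_zero⟩).elim

end CommBanachAlgebra

theorem spectrum.finite_of_finiteDimensional {K A : Type*} [Field K] [Ring A] [Algebra K A]
    [FiniteDimensional K A] (a : A) : (spectrum K a).Finite := by
  cases subsingleton_or_nontrivial A
  · simp [spectrum.of_subsingleton]
  refine (Polynomial.finite_setOfPred_isRoot
    (minpoly.ne_zero (Algebra.IsIntegral.isIntegral a))).subset fun r hr => ?_
  have := spectrum.subset_polynomial_aeval a (minpoly K a) ⟨r, hr, rfl⟩
  simpa [spectrum.zero_eq] using this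

theorem isPreconnected_setOf_isUnit {B : Type*} [NormedRing B] [NormedAlgebra ℂ B]
    [FiniteDimensional ℂ B] : IsPreconnected {x : B | IsUnit x} := by
  refine isPreconnected_of_forall 1 fun u hu => ?_
  set f : ℂ → B := fun z => 1 + z • (u - 1) with hf
  have hbad : {z | IsUnit (f z)}ᶜ ⊆ (fun r => (1 - r)⁻¹) '' spectrum ℂ u := by
    intro z hz
    have hz0 : z ≠ 0 := by rintro rfl; simp [hf] at hz
    refine ⟨1 - z⁻¹, spectrum.mem_iff.2 fun h => hz ?_, by simp⟩
    have : f z = algebraMap ℂ B (-z) * (algebraMap ℂ B (1 - z⁻¹) - u) := by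
      rw [mul_sub, ← map_mul, ← Algebra.smul_def,
        show -z * (1 - z⁻¹) = 1 - z by field_simp; ring, Algebra.algebraMap_eq_smul_one]
      module
    rw [Set.mem_ofPred_eq, this]
    exact ((neg_ne_zero.2 hz0).isUnit.map _).mul h
  have hconn : IsConnected {z | IsUnit (f z)} := by
    simpa using ((spectrum.finite_of_finiteDimensional u).image _).countable.mono hbad
      |>.isConnected_compl_of_one_lt_rank (by simp)
  refine ⟨f '' {z | IsUnit (f z)}, by rintro _ ⟨z, hz, rfl⟩; exact hz, ⟨0, by simp [hf]⟩,
    ⟨1, by simpa [hf] using hu⟩, hconn.isPreconnected.image f (by fun_prop)⟩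

theorem exists_pairwise_commute_exp_eq {𝔸 ι : Type*} [NormedRing 𝔸] [NormedAlgebra ℂ 𝔸]
    [FiniteDimensional ℂ 𝔸] (M : ι → 𝔸) (hinv : ∀ j, IsUnit (M j))
    (hcomm : ∀ i j, Commute (M i) (M j)) :
    ∃ A : ι → 𝔸, (∀ i j, Commute (A i) (A j)) ∧ ∀ j, exp (A j) = M j := by
  let u j := (hinv j).unit
  set gens := Set.range (fun j => (u j : 𝔸)) ∪ Set.range (fun j => ↑(u j)⁻¹)
  set S := Algebra.adjoin ℂ gens
  have hgens : ∀ a ∈ gens, ∀ b ∈ gens, a * b = b * a := by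
    rintro _ (⟨i, rfl⟩ | ⟨i, rfl⟩) _ (⟨j, rfl⟩ | ⟨j, rfl⟩)
    · exact hcomm i j
    · exact ((hcomm j i).units_inv_left (u := u j)).symm.eq
    · exact (hcomm i j).units_inv_left.eq
    · exact ((hcomm i j).units_inv_left.symm.units_inv_left (u := u j)).symm.eq
  have : IsMulCommutative S := Algebra.isMulCommutative_adjoin ℂ hgens
  let _ : NormedCommRing S := { (inferInstance : NormedRing S) with mul_comm := mul_comm' }
  let _ : NormedAlgebra ℚ S := .restrictScalars ℚ ℂ S
  let _ : NormedAlgebra ℚ 𝔸 := .restrictScalars ℚ ℂ 𝔸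
  have : CompleteSpace S := FiniteDimensional.complete ℂ S
  have hunit : ∀ j, ∃ v : S, (v : 𝔸) = M j ∧ IsUnit v := fun j =>
    ⟨⟨u j, Algebra.subset_adjoin (.inl ⟨j, rfl⟩)⟩, rfl,
      IsUnit.of_mul_eq_one ⟨_, Algebra.subset_adjoin (.inr ⟨j, rfl⟩)⟩ (Subtype.ext (u j).mul_inv)⟩
  choose v hvM hv using hunit
  choose a ha using fun j => mem_range_exp_of_isUnit isPreconnected_setOf_isUnit (hv j)
  refine ⟨fun j => a j, fun i j => congrArg Subtype.val (mul_comm (a i) (a j)), fun j => ?_⟩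
  rw [← hvM, ← ha j]
  exact (map_exp S.val continuous_subtype_val (a j)).symm

/-- any finite collection of pairwise commuting invertible matrices
`M₁, …, M_k` admits pairwise commuting matrices `A₁, …, A_k` with `exp(2πi Aⱼ) = Mⱼ`. -/
theorem stmt2 (n k : ℕ) (M : Fin k → Matrix (Fin n) (Fin n) ℂ)
    (hinv : ∀ j, IsUnit (M j)) (hcomm : ∀ i j, Commute (M i) (M j)) :
    ∃ A : Fin k → Matrix (Fin n) (Fin n) ℂ,
      (∀ i j, Commute (A i) (A j)) ∧
      ∀ j, NormedSpace.exp ((2 * (Real.pi : ℂ) * Complex.I) • A j) = M j := by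
  -- Matrices carry no global norm; `exp` only sees the topology, which this norm induces.
  let _ : NormedRing (Matrix (Fin n) (Fin n) ℂ) := Matrix.linftyOpNormedRing
  let _ : NormedAlgebra ℂ (Matrix (Fin n) (Fin n) ℂ) := Matrix.linftyOpNormedAlgebra
  obtain ⟨L, hLcomm, hLexp⟩ := exists_pairwise_commute_exp_eq M hinv hcomm
  have h2πi : 2 * (Real.pi : ℂ) * Complex.I ≠ 0 := by simp [Real.pi_ne_zero]
  refine ⟨fun j => (2 * (Real.pi : ℂ) * Complex.I)⁻¹ • L j,
    fun i j => ((hLcomm i j).smul_left _).smul_right _, fun j => ?_⟩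
  rw [smul_smul, mul_inv_cancel₀ h2πi, one_smul]
  exact hLexp j
end
end

section
/- Let ξ = Σᵢ cᵢ(t) dtᵢ be a holomorphic 1-form on an open set U ⊆ ℂ^m such that c₁ is nonvanishing at a point a ∈ U. Then any holomorphic k-form ω with k < m satisfying ω ∧ ξ = 0 is divisible by ξ near a: there exists a (k−1)-form θ holomorphic at a with ω = θ ∧ ξ. -/
open scoped BigOperators

noncomputable section

/-! Contracting `ω ∧ ξ = 0` with `∂/∂t₁` gives `c₁ ω = ξ ∧ ι₁ω`, where `ι₁ω = ω(∂/∂t₁, ·)`,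
so wherever `c₁ ≠ 0` the form `θ = ±c₁⁻¹ ι₁ω` divides `ω`. The only combinatorics is to
identify the normalised wedge `ω ∧ ξ` with the signed sum `wedgeOne ω ξ` when `ω` is
alternating, grouping the permutations of `Fin (n + 1)` by the image of the last slot. -/

open Equiv

namespace Equiv.Perm

variable {n : ℕ}

def insertLast (j : Fin (n + 1)) (e : Perm (Fin n)) : Perm (Fin (n + 1)) :=
  j.cycleRange.symm * finRotate (n + 1) * e.extendDomain (finSuccAboveEquiv (Fin.last n))

theorem insertLast_last (j : Fin (n + 1)) (e : Perm (Fin n)) :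
    insertLast j e (Fin.last n) = j := by
  have : e.extendDomain (finSuccAboveEquiv (Fin.last n)) (Fin.last n) = Fin.last n :=
    e.extendDomain_apply_not_subtype _ (by simp)
  simp [insertLast, this]

theorem insertLast_castSucc (j : Fin (n + 1)) (e : Perm (Fin n)) (a : Fin n) :
    insertLast j e a.castSucc = j.succAbove (e a) := by
  have := e.extendDomain_apply_image (finSuccAboveEquiv (Fin.last n)) a
  simp only [finSuccAboveEquiv_apply, Fin.succAbove_last] at this
  simp [insertLast, this, Fin.coeSucc_eq_succ]

theorem sign_insertLast (j : Fin (n + 1)) (e : Perm (Fin n)) :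
    sign (insertLast j e) = (-1) ^ (n + (j : ℕ)) * sign e := by
  rw [insertLast, map_mul, map_mul, sign_symm, Fin.sign_cycleRange, sign_finRotate,
    sign_extendDomain, Nat.add_sub_cancel, pow_add, mul_comm ((-1) ^ (j : ℕ))]

theorem insertLast_bijective :
    Function.Bijective fun p : Fin (n + 1) × Perm (Fin n) => insertLast p.1 p.2 := by
  rw [Fintype.bijective_iff_injective_and_card]
  refine ⟨fun ⟨j, e⟩ ⟨j', e'⟩ h => ?_, by simp [Fintype.card_perm, Nat.factorial_succ]⟩
  obtain rfl : j = j' := by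
    simpa only [insertLast_last] using congrArg (· (Fin.last n)) h
  have he : e = e' := Equiv.ext fun a => Fin.succAbove_right_injective <| by
    simpa only [insertLast_castSucc] using congrArg (· a.castSucc) h
  rw [he]

end Equiv.Perm

namespace Form

variable {m n : ℕ}

def IsAlternatingAt (ω : Form m n) (x : Pt m) : Prop :=
  ∀ (idx : Fin n → Fin m) (σ : Perm (Fin n)),
    ω x (idx ∘ σ) = ((Perm.sign σ : ℤ) : ℂ) * ω x idx

theorem wedge_eq_wedgeOne {ω : Form m n} {x : Pt m} (hω : ω.IsAlternatingAt x)
    (ξ : Form m 1) (v : Fin (n + 1) → Fin m) :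
    wedge ω ξ x v = wedgeOne ω ξ x v := by
  set F : Perm (Fin (n + 1)) → ℂ := fun σ => ((Perm.sign σ : ℤ) : ℂ) *
    (ω x fun a => v (σ (Fin.castAdd 1 a))) * (ξ x fun b => v (σ (Fin.natAdd n b)))
  set T : Fin (n + 1) → ℂ := fun j =>
    (-1) ^ (n + (j : ℕ)) * ξ x (fun _ => v j) * ω x fun a => v (j.succAbove a)
  have hF (j : Fin (n + 1)) (e : Perm (Fin n)) : F (Perm.insertLast j e) = T j := by
    have hlast (b : Fin 1) : Fin.natAdd n b = Fin.last n :=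
      Fin.ext (by simp [Fin.fin_one_eq_zero b])
    have hω' : (ω x fun a => v (Perm.insertLast j e (Fin.castAdd 1 a))) =
        ((Perm.sign e : ℤ) : ℂ) * ω x fun a => v (j.succAbove a) := by
      simp only [← hω (fun a => v (j.succAbove a)) e]
      exact congrArg (ω x) (funext fun a => congrArg v (Perm.insertLast_castSucc j e a))
    have hsign : ((Perm.sign e : ℤ) : ℂ) * ((Perm.sign e : ℤ) : ℂ) = 1 := by
      rw [← Int.cast_mul, ← Units.val_mul, Int.units_mul_self, Units.val_one, Int.cast_one]
    simp only [F, T, hω', hlast, Perm.insertLast_last, Perm.sign_insertLast]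
    push_cast
    linear_combination ((-1) ^ (n + (j : ℕ)) * ξ x (fun _ => v j) *
      ω x fun a => v (j.succAbove a)) * hsign
  have hsum : ∑ σ, F σ = (n.factorial : ℂ) * ∑ j, T j := by
    rw [← Fintype.sum_bijective _ Perm.insertLast_bijective _ F fun _ => rfl,
      Fintype.sum_prod_type, Finset.mul_sum]
    simp [hF, Fintype.card_perm]
  have hfac : (n.factorial : ℂ) ≠ 0 := Nat.cast_ne_zero.2 n.factorial_ne_zero
  rw [wedge, hsum, wedgeOne, oneWedge, Nat.factorial_one, Nat.cast_one, mul_one,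
    inv_mul_cancel_left₀ hfac, Finset.mul_sum]
  exact Finset.sum_congr rfl fun j _ => by simp only [T, pow_add]; ring

def contract (ω : Form m (n + 1)) (i : Fin m) : Form m n := fun y w => ω y (Fin.cons i w)

theorem oneWedge_cons (α : Form m 1) (ω : Form m (n + 1)) (x : Pt m) (i : Fin m)
    (idx : Fin (n + 1) → Fin m) :
    oneWedge α ω x (Fin.cons i idx) =
      α x (fun _ => i) * ω x idx - oneWedge α (ω.contract i) x idx := by
  have hsucc (j : Fin (n + 1)) :
      (fun a => Fin.cons (α := fun _ => Fin m) i idx (j.succ.succAbove a)) =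
        Fin.cons i fun a => idx (j.succAbove a) :=
    Fin.cons_comp_succ_succAbove i idx j
  simp only [oneWedge, contract, Fin.sum_univ_succ (n := n + 1), Fin.val_zero, pow_zero, one_mul,
    Fin.cons_zero, Fin.val_succ, pow_succ, Fin.cons_succ, Fin.succAbove_zero, hsucc,
    sub_eq_add_neg, ← Finset.sum_neg_distrib]
  exact congrArg _ (Finset.sum_congr rfl fun _ _ => by ring)

theorem oneWedge_mul_left (α : Form m 1) (f : Pt m → ℂ) (ω : Form m n) (x : Pt m)
    (idx : Fin (n + 1) → Fin m) :
    oneWedge α (fun y w => f y * ω y w) x idx = f x * oneWedge α ω x idx := by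
  simp only [oneWedge, Finset.mul_sum]
  exact Finset.sum_congr rfl fun _ _ => by ring

end Form

/-- de Rham division lemma: if `ξ = Σ cᵢ dtᵢ` is a holomorphic 1-form on
`U ⊆ ℂ^m` with `c₁(a) ≠ 0`, then any holomorphic (alternating) `k`-form `ω`, `k < m`,
with `ω ∧ ξ = 0` on `U` is divisible by `ξ` near `a`, with holomorphic ratio `θ`. -/
theorem stmt4 (m k : ℕ) (hkm : k + 1 < m) (U : Set (Pt m)) (hU : IsOpen U)
    (a : Pt m) (ha : a ∈ U)
    (ξ : Form m 1) (hξ : Form.IsHolomorphicOn ξ U)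
    (hc1 : ξ a (fun _ => (⟨0, by omega⟩ : Fin m)) ≠ 0)
    (ω : Form m (k + 1)) (hω : Form.IsHolomorphicOn ω U)
    (hAlt : ∀ x, ∀ idx : Fin (k + 1) → Fin m, ∀ σ : Equiv.Perm (Fin (k + 1)),
      ω x (idx ∘ σ) = ((Equiv.Perm.sign σ : ℤ) : ℂ) * ω x idx)
    (hdiv : ∀ x ∈ U, ∀ idx, Form.wedge ω ξ x idx = 0) :
    ∃ V : Set (Pt m), IsOpen V ∧ a ∈ V ∧ V ⊆ U ∧
      ∃ θ : Form m k, Form.IsHolomorphicOn θ V ∧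
        ∀ x ∈ V, ∀ idx, ω x idx = Form.wedgeOne θ ξ x idx := by
  set i₀ : Fin m := ⟨0, by omega⟩
  set c : Pt m → ℂ := fun x => ξ x fun _ => i₀
  have hc : DifferentiableOn ℂ c U := hξ _
  refine ⟨U ∩ c ⁻¹' {0}ᶜ, hc.continuousOn.isOpen_inter_preimage hU isOpen_compl_singleton,
    ⟨ha, hc1⟩, Set.inter_subset_left,
    fun x idx => (-1) ^ k * (c x)⁻¹ * ω.contract i₀ x idx, fun idx => ?_, ?_⟩
  · exact (((hc.mono Set.inter_subset_left).inv fun x hx => hx.2).const_mul _).mul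
      ((hω _).mono Set.inter_subset_left)
  · rintro x ⟨hxU, hx : c x ≠ 0⟩ idx
    have hzero : ξ.oneWedge ω x (Fin.cons i₀ idx) = 0 := by
      have := hdiv x hxU (Fin.cons i₀ idx)
      rw [Form.wedge_eq_wedgeOne (hAlt x), Form.wedgeOne] at this
      exact (mul_eq_zero.1 this).resolve_left (pow_ne_zero _ (neg_ne_zero.2 one_ne_zero))
    change ω x idx = (-1) ^ k * ξ.oneWedge
      (fun y w => (-1) ^ k * (c y)⁻¹ * ω.contract i₀ y w) x idx
    rw [Form.oneWedge_mul_left ξ (fun y => (-1) ^ k * (c y)⁻¹) (ω.contract i₀)]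
    have hι : ξ.oneWedge (ω.contract i₀) x idx = c x * ω x idx := by
      linear_combination Form.oneWedge_cons ξ ω x i₀ idx - hzero
    rw [hι]
    field_simp
    simp [← pow_mul]
end
end

section
/- Consider Ω = Σ_{j=1}^k Aⱼ(λ) df_j/f_j on ℂ¹ × ℂ^k with f_j(z,λ) = z − λ_j, where the matrix functions Aⱼ depend only on λ = (λ₁,…,λ_k) and Σⱼ Aⱼ(λ) ≡ 0. Then Ω is flat (dΩ = Ω ∧ Ω) if and only if the Aⱼ satisfy the Schlesinger equations dA_s = − Σ_{j ≠ s} [A_s, A_j] (dλ_s − dλ_j)/(λ_s − λ_j) for all s. -/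
open scoped BigOperators

noncomputable section

/-!
Write `θⱼ = dfⱼ/fⱼ`, so that `dΩ = ∑ⱼ dAⱼ ∧ θⱼ` and `Ω ∧ Ω = ∑ᵢⱼ AᵢAⱼ θᵢ ∧ θⱼ`. Symmetrising in
`(i, j)` and using the partial-fraction identity
`1/((fⱼ - fₛ) fₛ) + 1/((fₛ - fⱼ) fⱼ) = 1/(fₛ fⱼ)` rewrites `Ω ∧ Ω` as `∑ₛ Rₛ ∧ θₛ`, where `Rₛ` is
the right-hand side of the Schlesinger equation for `dAₛ`. Hence the Schlesinger equations give
flatness. Conversely, flatness gives `∑ₛ (dAₛ - Rₛ) ∧ θₛ = 0`; as the `Aₛ` do not depend on `z`,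
evaluating on `(∂_{λₜ}, ∂_z)` yields `∑ₛ (dAₛ - Rₛ)(∂_{λₜ}) / (z - λₛ) = 0` for every `z`, and the
simple fractions `1/(z - λₛ)` are linearly independent (compare residues).
-/

open Finset Filter Topology

section Calculus

variable {𝕜 E F : Type*} [NontriviallyNormedField 𝕜] [NormedAddCommGroup E] [NormedSpace 𝕜 E]
  [NormedAddCommGroup F] [NormedSpace 𝕜 F] {f : E → F} {v : E}

theorem fderiv_add_smul_of_forall_add_smul_eq (hf : ∀ w (t : 𝕜), f (w + t • v) = f w)
    (x : E) (t : 𝕜) : fderiv 𝕜 f (x + t • v) = fderiv 𝕜 f x := by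
  rw [← fderiv_comp_add_right]
  simp only [hf]

theorem fderiv_apply_eq_zero_of_forall_add_smul_eq (hf : ∀ w (t : 𝕜), f (w + t • v) = f w)
    (x : E) : fderiv 𝕜 f x v = 0 := by
  by_cases hd : DifferentiableAt 𝕜 f x
  · rw [← hd.lineDeriv_eq_fderiv, lineDeriv]
    simp [hf]
  · simp [fderiv_zero_of_not_differentiableAt hd]

theorem fderiv_mul_div_apply {a : E → 𝕜} {x : E} (ha : DifferentiableAt 𝕜 a x) {φ : E →L[𝕜] 𝕜}
    (hφ : φ x ≠ 0) (c : 𝕜) (v : E) :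
    fderiv 𝕜 (fun y => a y * (c / φ y)) x v
      = fderiv 𝕜 a x v * (c / φ x) - a x * (c * φ v / φ x ^ 2) := by
  have h : HasFDerivAt (fun y => a y * (c * (φ y)⁻¹)) _ x :=
    ha.hasFDerivAt.mul (((hasFDerivAt_inv hφ).comp x φ.hasFDerivAt).const_mul c)
  simp only [div_eq_mul_inv]
  rw [h.fderiv]
  simp only [add_apply, smul_apply, ContinuousLinearMap.comp_apply,
    ContinuousLinearMap.toSpanSingleton_apply, smul_eq_mul]
  field_simp
  ring

end Calculus

theorem eq_zero_of_forall_sum_div_sub_eq_zero {ι : Type*} [Fintype ι] [DecidableEq ι]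
    {L : ι → ℂ} (hL : Function.Injective L) {a : ι → ℂ}
    (h : ∀ z, (∀ j, z ≠ L j) → ∑ j, a j / (z - L j) = 0) (s : ι) : a s = 0 := by
  -- `G` is `(z - L s) * ∑ j, a j / (z - L j)` with the pole at `L s` cancelled.
  set G : ℂ → ℂ := fun z => a s + ∑ j ∈ univ.erase s, a j * ((z - L s) / (z - L j))
  have hG_cont : ContinuousAt G (L s) := by
    refine continuousAt_const.add (tendsto_finsetSum _ fun j hj => ?_)
    have : L s - L j ≠ 0 := sub_ne_zero.2 (hL.ne (ne_of_mem_erase hj).symm)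
    show ContinuousAt (fun z => a j * ((z - L s) / (z - L j))) (L s)
    fun_prop (disch := assumption)
  have hG_zero : ∀ᶠ z in 𝓝[≠] L s, G z = 0 := by
    have hpoles : ∀ᶠ z in 𝓝[≠] L s, ∀ j, z ≠ L j := by
      refine eventually_all.2 fun j => ?_
      rcases eq_or_ne j s with rfl | hjs
      · exact self_mem_nhdsWithin
      · exact eventually_ne_nhdsWithin (hL.ne hjs).symm
    filter_upwards [hpoles] with z hz
    have hzs : z - L s ≠ 0 := sub_ne_zero.2 (hz s)
    calc G z = (z - L s) * ∑ j, a j / (z - L j) := by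
          simp only [G]
          rw [← add_sum_erase _ _ (mem_univ s), mul_add, mul_sum]
          congr 1
          · field_simp
          · exact sum_congr rfl fun j _ => by ring
      _ = 0 := by rw [h z hz, mul_zero]
  have hG_at : G (L s) = a s := by simp [G]
  rw [← hG_at]
  exact tendsto_nhds_unique (hG_cont.tendsto.mono_left nhdsWithin_le_nhds)
    (tendsto_const_nhds.congr' (hG_zero.mono fun z hz => hz.symm))

theorem sum_sum_sub_swap_mul {ι R : Type*} [Fintype ι] [CommRing R] (M Q : ι → ι → R) :
    ∑ i, ∑ j, (M i j - M j i) * Q i j = ∑ i, ∑ j, M i j * (Q i j - Q j i) := by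
  simp only [sub_mul, mul_sub, sum_sub_distrib]
  rw [sum_comm (f := fun i j => M j i * Q i j)]

namespace Form

variable {m : ℕ}

theorem dFun_apply (g : Pt m → ℂ) (x : Pt m) (idx : Fin 1 → Fin m) :
    dFun g x idx = fderiv ℂ g x (Pi.single (idx 0) 1) := by
  simp [dFun, d]

theorem d_one_apply (ω : Form m 1) (x : Pt m) (idx : Fin 2 → Fin m) :
    d ω x idx = fderiv ℂ (fun y => ω y fun _ => idx 1) x (Pi.single (idx 0) 1)
      - fderiv ℂ (fun y => ω y fun _ => idx 0) x (Pi.single (idx 1) 1) := by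
  have hconst (i : Fin 2) :
      (fun a : Fin 1 => idx (i.succAbove a)) = fun _ => idx (i.succAbove 0) :=
    funext fun a => by rw [Subsingleton.elim a 0]
  rw [d, Fin.sum_univ_two, hconst, hconst]
  simp [sub_eq_add_neg]

theorem wedge_one_one_apply (α β : Form m 1) (x : Pt m) (idx : Fin 2 → Fin m) :
    wedge α β x idx = α x (fun _ => idx 0) * β x (fun _ => idx 1)
      - α x (fun _ => idx 1) * β x (fun _ => idx 0) := by
  have huniv : (univ : Finset (Equiv.Perm (Fin 2))) = {1, Equiv.swap 0 1} := by decide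
  have hconst (σ : Equiv.Perm (Fin 2)) (e : Fin 1 → Fin 2) :
      (fun a : Fin 1 => idx (σ (e a))) = fun _ => idx (σ (e 0)) :=
    funext fun a => by rw [Subsingleton.elim a 0]
  rw [wedge, huniv, sum_pair (by decide)]
  simp only [hconst _ (Fin.castAdd 1), hconst _ (Fin.natAdd 1)]
  simp [sub_eq_add_neg]

theorem d_apply_of_eq_sum_mul_div {ι : Type*} [Fintype ι] (ω : Form m 1)
    (a : ι → Pt m → ℂ) (φ : ι → Pt m →L[ℂ] ℂ)
    (hω : ∀ y w, ω y (fun _ => w) = ∑ j, a j y * (φ j (Pi.single w 1) / φ j y))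
    {x : Pt m} (ha : ∀ j, DifferentiableAt ℂ (a j) x) (hφ : ∀ j, φ j x ≠ 0)
    (idx : Fin 2 → Fin m) :
    d ω x idx = ∑ j, (fderiv ℂ (a j) x (Pi.single (idx 0) 1) * φ j (Pi.single (idx 1) 1)
      - fderiv ℂ (a j) x (Pi.single (idx 1) 1) * φ j (Pi.single (idx 0) 1)) / φ j x := by
  have hdiff (w : Fin m) (j : ι) :
      DifferentiableAt ℂ (fun y => a j y * (φ j (Pi.single w 1) / φ j y)) x := by
    have := ha j
    have := hφ j
    fun_prop (disch := assumption)
  simp only [d_one_apply, hω]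
  rw [fderiv_fun_sum fun j _ => hdiff _ j, fderiv_fun_sum fun j _ => hdiff _ j]
  simp only [FunLike.coe_sum, Finset.sum_apply, fderiv_mul_div_apply (ha _) (hφ _),
    ← sum_sub_distrib]
  refine sum_congr rfl fun j _ => ?_
  have := hφ j
  field_simp
  ring

end Form

theorem MForm.wedge_apply_of_eq_sum_mul {ι : Type*} [Fintype ι] {n m : ℕ} (Ω : MForm n m 1)
    (x : Pt m) (B : ι → Matrix (Fin n) (Fin n) ℂ) (θ : ι → Fin m → ℂ)
    (hΩ : ∀ p q w, Ω p q x (fun _ => w) = ∑ j, B j p q * θ j w) (p q : Fin n)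
    (idx : Fin 2 → Fin m) :
    wedge Ω Ω p q x idx = ∑ i, ∑ j, (B i * B j) p q *
      (θ i (idx 0) * θ j (idx 1) - θ i (idx 1) * θ j (idx 0)) := by
  simp only [wedge, Form.wedge_one_one_apply, hΩ, Matrix.mul_apply, sum_mul, mul_sum,
    ← sum_sub_distrib]
  rw [sum_comm, sum_congr rfl fun j _ => sum_comm, sum_comm]
  exact sum_congr rfl fun i _ => sum_congr rfl fun j _ => sum_congr rfl fun r _ => by ring

namespace Schlesinger

variable {n k : ℕ}

/-- The value of `d(z - λⱼ)` on the `w`-th coordinate vector of `ℂ^{1+k}`: coordinate `0` is `z`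
and coordinate `j.succ` is `λⱼ`. -/
def df (j : Fin k) (w : Fin (k + 1)) : ℂ :=
  (if w = 0 then 1 else 0) - (if w = j.succ then 1 else 0)

/-- For `L j = λⱼ` and `M i j = (AᵢAⱼ)_{pq}`, the `(p, q)` entry of the right-hand side of the
Schlesinger equation for `dAₛ`, evaluated on the `w`-th coordinate vector. -/
def rhs (L : Fin k → ℂ) (M : Fin k → Fin k → ℂ) (s : Fin k) (w : Fin (k + 1)) : ℂ :=
  -∑ j ∈ univ \ {s}, (M s j - M j s) *
    (((if w = s.succ then 1 else 0) - (if w = j.succ then 1 else 0)) / (L s - L j))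

def IsSumDlog (A : Fin k → Pt (k + 1) → Matrix (Fin n) (Fin n) ℂ) (Ω : MForm n (k + 1) 1) :
    Prop :=
  ∀ p q x w, Ω p q x (fun _ => w) = ∑ j, A j x p q * (df j w / (x 0 - x j.succ))

section Algebra

variable {L : Fin k → ℂ} {M : Fin k → Fin k → ℂ}

theorem df_zero (j : Fin k) : df j 0 = 1 := by
  simp [df, (Fin.succ_ne_zero j).symm]

theorem rhs_zero (s : Fin k) : rhs L M s 0 = 0 := by
  simp [rhs, (Fin.succ_ne_zero _).symm]

theorem rhs_eq_sum (s : Fin k) (w : Fin (k + 1)) :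
    rhs L M s w = -∑ j, (M s j - M j s) * ((df j w - df s w) / (L s - L j)) := by
  rw [rhs, ← sum_subset (subset_univ (univ \ {s})) fun j _ hj => by simp_all]
  congr 1
  exact sum_congr rfl fun j _ => by simp only [df]; ring

theorem sum_rhs_wedge_df (hL : Function.Injective L) {z : ℂ} (hz : ∀ j, z ≠ L j)
    (M : Fin k → Fin k → ℂ) (u v : Fin (k + 1)) :
    ∑ s, (rhs L M s u * df s v - rhs L M s v * df s u) / (z - L s)
      = ∑ i, ∑ j, M i j * (df i u / (z - L i) * (df j v / (z - L j))
          - df i v / (z - L i) * (df j u / (z - L j))) := by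
  set Q : Fin k → Fin k → ℂ := fun s j =>
    ((df j v - df s v) * df s u - (df j u - df s u) * df s v) / (L s - L j) / (z - L s)
  calc ∑ s, (rhs L M s u * df s v - rhs L M s v * df s u) / (z - L s)
      = ∑ s, ∑ j, (M s j - M j s) * Q s j := by
        refine sum_congr rfl fun s _ => ?_
        rw [rhs_eq_sum, rhs_eq_sum, neg_mul, neg_mul, neg_sub_neg, sum_mul, sum_mul,
          ← sum_sub_distrib, sum_div]
        exact sum_congr rfl fun j _ => by simp only [Q]; ring
    _ = ∑ s, ∑ j, M s j * (Q s j - Q j s) := sum_sum_sub_swap_mul M Q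
    _ = _ := by
        refine sum_congr rfl fun s _ => sum_congr rfl fun j _ => ?_
        congr 1
        rcases eq_or_ne s j with rfl | hsj
        · ring
        -- the partial-fraction identity
        have := sub_ne_zero.2 (hL.ne hsj)
        have := sub_ne_zero.2 (hL.ne hsj.symm)
        have := sub_ne_zero.2 (hz s)
        have := sub_ne_zero.2 (hz j)
        simp only [Q]
        field_simp
        ring

theorem eq_rhs_of_forall_sum_wedge_df (hL : Function.Injective L) (M : Fin k → Fin k → ℂ)
    {E : Fin k → Fin (k + 1) → ℂ} (hE : ∀ j, E j 0 = 0)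
    (h : ∀ z, (∀ j, z ≠ L j) → ∀ u v,
      ∑ s, (E s u * df s v - E s v * df s u) / (z - L s)
        = ∑ i, ∑ j, M i j * (df i u / (z - L i) * (df j v / (z - L j))
          - df i v / (z - L i) * (df j u / (z - L j))))
    (s : Fin k) (w : Fin (k + 1)) : E s w = rhs L M s w := by
  refine Fin.cases (by rw [hE, rhs_zero]) (fun t => sub_eq_zero.1 ?_) w
  refine eq_zero_of_forall_sum_div_sub_eq_zero (a := fun s => E s t.succ - rhs L M s t.succ) hL
    (fun z hz => ?_) s
  have hzt := h z hz t.succ 0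
  rw [← sum_rhs_wedge_df hL hz M, ← sub_eq_zero, ← sum_sub_distrib] at hzt
  simpa [hE, rhs_zero, df_zero, sub_div] using hzt

end Algebra

variable {A : Fin k → Pt (k + 1) → Matrix (Fin n) (Fin n) ℂ} {Ω : MForm n (k + 1) 1}

theorem isOpen_setOf_succ_ne :
    IsOpen {x : Pt (k + 1) | ∀ i j : Fin k, i ≠ j → x i.succ ≠ x j.succ} := by
  simp only [Set.ofPred_forall]
  exact isOpen_iInter_of_finite fun i => isOpen_iInter_of_finite fun j =>
    isOpen_iInter_of_finite fun _ => isOpen_ne_fun (continuous_apply _) (continuous_apply _)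

theorem apply_add_smul_single_zero
    (hAdep : ∀ s x y, (∀ j : Fin k, x j.succ = y j.succ) → A s x = A s y)
    (s : Fin k) (x : Pt (k + 1)) (t : ℂ) : A s (x + t • Pi.single 0 1) = A s x :=
  hAdep s _ _ fun j => by simp [Fin.succ_ne_zero]

theorem d_apply_of_isSumDlog (hΩ : IsSumDlog A Ω) {p q : Fin n} {x : Pt (k + 1)}
    (hA : ∀ j, DifferentiableAt ℂ (fun y => A j y p q) x) (hx : ∀ j : Fin k, x 0 ≠ x j.succ)
    (idx : Fin 2 → Fin (k + 1)) :
    MForm.d Ω p q x idx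
      = ∑ j, (fderiv ℂ (fun y => A j y p q) x (Pi.single (idx 0) 1) * df j (idx 1)
        - fderiv ℂ (fun y => A j y p q) x (Pi.single (idx 1) 1) * df j (idx 0))
          / (x 0 - x j.succ) := by
  let φ (j : Fin k) : Pt (k + 1) →L[ℂ] ℂ := .proj 0 - .proj j.succ
  have hφ (j : Fin k) (w : Fin (k + 1)) : φ j (Pi.single w 1) = df j w := by
    simp [φ, df, Pi.single_apply, eq_comm]
  have hφx (j : Fin k) (y : Pt (k + 1)) : φ j y = y 0 - y j.succ := rfl
  have := Form.d_apply_of_eq_sum_mul_div (Ω p q) (fun j y => A j y p q) φ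
    (fun y w => by simp only [hφ, hφx]; exact hΩ p q y w) hA (fun j => sub_ne_zero.2 (hx j)) idx
  simp only [hφ, hφx] at this
  exact this

theorem wedge_apply_of_isSumDlog (hΩ : IsSumDlog A Ω) (p q : Fin n) (x : Pt (k + 1))
    (idx : Fin 2 → Fin (k + 1)) :
    MForm.wedge Ω Ω p q x idx = ∑ i, ∑ j, (A i x * A j x) p q *
      (df i (idx 0) / (x 0 - x i.succ) * (df j (idx 1) / (x 0 - x j.succ))
        - df i (idx 1) / (x 0 - x i.succ) * (df j (idx 0) / (x 0 - x j.succ))) :=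
  MForm.wedge_apply_of_eq_sum_mul Ω x (fun j => A j x) (fun j w => df j w / (x 0 - x j.succ))
    (fun p q w => hΩ p q x w) p q idx

theorem fderiv_eq_rhs_of_flat
    (hAdep : ∀ s x y, (∀ j : Fin k, x j.succ = y j.succ) → A s x = A s y)
    (hAhol : ∀ s p q, DifferentiableOn ℂ (fun x => A s x p q)
      {x : Pt (k + 1) | ∀ i j : Fin k, i ≠ j → x i.succ ≠ x j.succ})
    (hΩ : IsSumDlog A Ω)
    (hflat : ∀ x : Pt (k + 1), (∀ i j : Fin k, i ≠ j → x i.succ ≠ x j.succ) →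
      (∀ j : Fin k, x 0 ≠ x j.succ) → ∀ p q idx, MForm.d Ω p q x idx = MForm.wedge Ω Ω p q x idx)
    (s : Fin k) {x : Pt (k + 1)} (hx : ∀ i j : Fin k, i ≠ j → x i.succ ≠ x j.succ)
    (p q : Fin n) (w : Fin (k + 1)) :
    fderiv ℂ (fun y => A s y p q) x (Pi.single w 1)
      = rhs (fun j => x j.succ) (fun i j => (A i x * A j x) p q) s w := by
  have hinv (j : Fin k) (y : Pt (k + 1)) (t : ℂ) :
      A j (y + t • Pi.single 0 1) p q = A j y p q := by
    rw [apply_add_smul_single_zero hAdep]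
  refine eq_rhs_of_forall_sum_wedge_df (fun i j h => not_imp_not.1 (hx i j) h) _
    (E := fun j w => fderiv ℂ (fun y => A j y p q) x (Pi.single w 1))
    (fun j => fderiv_apply_eq_zero_of_forall_add_smul_eq (hinv j) x) (fun z hz u v => ?_) s w
  -- flatness at `y = (z, λ)`, where `A` and `dA` take their values at `x = (x 0, λ)`
  set y := x + (z - x 0) • Pi.single 0 1
  have hy0 : y 0 = z := by simp [y]
  have hysucc (j : Fin k) : y j.succ = x j.succ := by simp [y, Fin.succ_ne_zero]
  have hyU : ∀ i j : Fin k, i ≠ j → y i.succ ≠ y j.succ := by simpa only [hysucc] using hx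
  have hyz : ∀ j : Fin k, y 0 ≠ y j.succ := by simpa only [hy0, hysucc] using hz
  have hAy (j : Fin k) : DifferentiableAt ℂ (fun y => A j y p q) y :=
    (hAhol j p q).differentiableAt (isOpen_setOf_succ_ne.mem_nhds hyU)
  have hEy (j : Fin k) : fderiv ℂ (fun y => A j y p q) y = fderiv ℂ (fun y => A j y p q) x :=
    fderiv_add_smul_of_forall_add_smul_eq (f := fun y => A j y p q) (hinv j) x _
  have h := hflat y hyU hyz p q ![u, v]
  rw [d_apply_of_isSumDlog hΩ hAy hyz, wedge_apply_of_isSumDlog hΩ] at h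
  simpa [hy0, hysucc, hEy, y, apply_add_smul_single_zero hAdep] using h

theorem flat_of_fderiv_eq_rhs
    (hAhol : ∀ s p q, DifferentiableOn ℂ (fun x => A s x p q)
      {x : Pt (k + 1) | ∀ i j : Fin k, i ≠ j → x i.succ ≠ x j.succ})
    (hΩ : IsSumDlog A Ω) {x : Pt (k + 1)} (hx : ∀ i j : Fin k, i ≠ j → x i.succ ≠ x j.succ)
    (hz : ∀ j : Fin k, x 0 ≠ x j.succ) (p q : Fin n)
    (hA : ∀ s w, fderiv ℂ (fun y => A s y p q) x (Pi.single w 1)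
      = rhs (fun j => x j.succ) (fun i j => (A i x * A j x) p q) s w)
    (idx : Fin 2 → Fin (k + 1)) :
    MForm.d Ω p q x idx = MForm.wedge Ω Ω p q x idx := by
  have hAx (j : Fin k) : DifferentiableAt ℂ (fun y => A j y p q) x :=
    (hAhol j p q).differentiableAt (isOpen_setOf_succ_ne.mem_nhds hx)
  rw [d_apply_of_isSumDlog hΩ hAx hz, wedge_apply_of_isSumDlog hΩ]
  simp only [hA]
  exact sum_rhs_wedge_df (fun i j h => not_imp_not.1 (hx i j) h) hz _ _ _

end Schlesinger

theorem stmt15_general (n k : ℕ)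
    (A : Fin k → Pt (k + 1) → Matrix (Fin n) (Fin n) ℂ)
    (hAdep : ∀ s x y, (∀ j : Fin k, x j.succ = y j.succ) → A s x = A s y)
    (hAhol : ∀ s p q, DifferentiableOn ℂ (fun x => A s x p q)
      {x : Pt (k + 1) | ∀ i j : Fin k, i ≠ j → x i.succ ≠ x j.succ})
    (Ω : MForm n (k + 1) 1)
    (hΩ : ∀ p q x, ∀ idx : Fin 1 → Fin (k + 1), Ω p q x idx =
      ∑ j, A j x p q *
        (((if idx 0 = 0 then 1 else 0) - (if idx 0 = j.succ then 1 else 0)) /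
          (x 0 - x j.succ))) :
    ((∀ x : Pt (k + 1), (∀ i j : Fin k, i ≠ j → x i.succ ≠ x j.succ) →
        (∀ j : Fin k, x 0 ≠ x j.succ) →
        ∀ p q, ∀ idx : Fin 2 → Fin (k + 1),
          MForm.d Ω p q x idx = MForm.wedge Ω Ω p q x idx)
      ↔
      (∀ s : Fin k, ∀ x : Pt (k + 1), (∀ i j : Fin k, i ≠ j → x i.succ ≠ x j.succ) →
        ∀ p q, ∀ idx : Fin 1 → Fin (k + 1),
          Form.dFun (fun y => A s y p q) x idx =
            -∑ j ∈ Finset.univ \ {s},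
              (A s x * A j x - A j x * A s x) p q *
                (((if idx 0 = s.succ then 1 else 0) -
                    (if idx 0 = j.succ then 1 else 0)) /
                  (x s.succ - x j.succ)))) := by
  have hΩ' : Schlesinger.IsSumDlog A Ω := fun p q x w => hΩ p q x fun _ => w
  simp only [Form.dFun_apply]
  constructor
  · intro hflat s x hx p q idx
    exact Schlesinger.fderiv_eq_rhs_of_flat hAdep hAhol hΩ' hflat s hx p q (idx 0)
  · intro hSch x hx hz p q
    exact Schlesinger.flat_of_fderiv_eq_rhs hAhol hΩ' hx hz p q
      fun s w => hSch s x hx p q fun _ => w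

/-- Schlesinger equations: for `Ω = Σⱼ Aⱼ(λ) dfⱼ/fⱼ` on `ℂ^{1+k}` with
`fⱼ(z,λ) = z − λⱼ`, the `Aⱼ` depending only on `λ` and `Σⱼ Aⱼ ≡ 0`, the form `Ω` is flat
(`dΩ = Ω ∧ Ω` off the polar locus and the collision locus) if and only if the `Aⱼ`
satisfy `dA_s = −Σ_{j≠s} [A_s, A_j] (dλ_s − dλ_j)/(λ_s − λ_j)` off the collision locus. -/
theorem stmt15 (n k : ℕ)
    (A : Fin k → Pt (k + 1) → Matrix (Fin n) (Fin n) ℂ)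
    (hAdep : ∀ s x y, (∀ j : Fin k, x j.succ = y j.succ) → A s x = A s y)
    (hAhol : ∀ s p q, DifferentiableOn ℂ (fun x => A s x p q)
      {x : Pt (k + 1) | ∀ i j : Fin k, i ≠ j → x i.succ ≠ x j.succ})
    (hsum : ∀ x, ∑ s, A s x = 0)
    (Ω : MForm n (k + 1) 1)
    (hΩ : ∀ p q x, ∀ idx : Fin 1 → Fin (k + 1), Ω p q x idx =
      ∑ j, A j x p q *
        (((if idx 0 = 0 then 1 else 0) - (if idx 0 = j.succ then 1 else 0)) /
          (x 0 - x j.succ))) :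
    ((∀ x : Pt (k + 1), (∀ i j : Fin k, i ≠ j → x i.succ ≠ x j.succ) →
        (∀ j : Fin k, x 0 ≠ x j.succ) →
        ∀ p q, ∀ idx : Fin 2 → Fin (k + 1),
          MForm.d Ω p q x idx = MForm.wedge Ω Ω p q x idx)
      ↔
      (∀ s : Fin k, ∀ x : Pt (k + 1), (∀ i j : Fin k, i ≠ j → x i.succ ≠ x j.succ) →
        ∀ p q, ∀ idx : Fin 1 → Fin (k + 1),
          Form.dFun (fun y => A s y p q) x idx =
            -∑ j ∈ Finset.univ \ {s},
              (A s x * A j x - A j x * A s x) p q *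
                (((if idx 0 = s.succ then 1 else 0) -
                    (if idx 0 = j.succ then 1 else 0)) /
                  (x s.succ - x j.succ)))) :=
  stmt15_general n k A hAdep hAhol Ω hΩ
end
end

section
/- Let Ω₀ = diag(α₁,…,α_n) be a diagonal matrix 1-form whose entries αᵢ = Σ_s aᵢ^s dt_s/t_s are closed logarithmic forms with constant residue vectors aᵢ ∈ ℂ^m, and suppose Ω₀ is non-resonant: aᵢ − aⱼ ∉ ℤ^m for all i ≠ j. Then the only formal gauge transformations H = E + (higher order terms) with dH = Ω₀H − HΩ₀ are constant diagonal matrices; in particular the normalizing transform with H(0) = E conjugating a flat perturbation of Ω₀ to Ω₀ is unique. -/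
open scoped BigOperators

noncomputable section

/-!
Entrywise, the gauge equation says `x_s ∂_s H_pq = (a_p^s - a_q^s) H_pq` wherever all coordinates
are nonzero. On a coordinate line this is an Euler equation `z g' = c g`; differentiating it `k`
times at `0` gives `(c - k) g⁽ᵏ⁾(0) = 0`, so every Taylor coefficient of `g` vanishes when
`c ∉ ℕ` (the off-diagonal entries, by non-resonance) and all but the constant one vanish when
`c = 0` (the diagonal entries). What is proved off the coordinate hyperplanes extends to the whole
polydisc by density and continuity.
-/

open Metric Filter Topology Function Set

theorem dense_setOf_forall_ne_zero {ι 𝕜 : Type*} [NontriviallyNormedField 𝕜] :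
    Dense {x : ι → 𝕜 | ∀ i, x i ≠ 0} := by
  have : {x : ι → 𝕜 | ∀ i, x i ≠ 0} = univ.pi fun _ => {0}ᶜ := by ext; simp
  exact this ▸ dense_pi univ fun _ _ => dense_compl_singleton 0

theorem update_mem_setOf_forall_ne_zero {ι M : Type*} [DecidableEq ι] [Zero M] {x : ι → M}
    (hx : ∀ t, x t ≠ 0) (s : ι) {z : M} (hz : z ≠ 0) : ∀ t, update x s z t ≠ 0 := by
  intro t
  rcases eq_or_ne t s with rfl | ht <;> simp [*]

theorem update_mem_ball_pi {ι : Type*} [Fintype ι] [DecidableEq ι] {E : ι → Type*}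
    [∀ i, SeminormedAddCommGroup (E i)] {x y : ∀ i, E i} {r : ℝ} (hx : x ∈ ball y r) {i : ι}
    {z : E i} (hz : z ∈ ball (y i) r) : update x i z ∈ ball y r := by
  rw [mem_ball, dist_pi_lt_iff (pos_of_mem_ball hz)]
  intro j
  rcases eq_or_ne j i with rfl | hj
  · simpa using hz
  · simpa [hj] using dist_le_pi_dist x y j |>.trans_lt hx

theorem iteratedDeriv_eq_zero_of_euler {g : ℂ → ℂ} {R : ℝ} {c : ℂ} (hR : 0 < R)
    (hg : DifferentiableOn ℂ g (ball 0 R))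
    (heuler : ∀ z ∈ ball (0 : ℂ) R, z ≠ 0 → z * deriv g z = c * g z) {k : ℕ} (hk : c ≠ k) :
    iteratedDeriv k g 0 = 0 := by
  have hga : AnalyticOnNhd ℂ g (ball 0 R) := hg.analyticOnNhd isOpen_ball
  have hiter : ∀ k, AnalyticOnNhd ℂ (iteratedDeriv k g) (ball 0 R) := fun k => by
    simpa only [iteratedDeriv_eq_iterate] using hga.iterated_deriv k
  have heuler₀ : EqOn (fun z => z * deriv g z) (fun z => c * g z) (ball 0 R) :=
    EqOn.of_subset_closure (fun z hz => heuler z hz.1 hz.2)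
      (continuousOn_id.mul hga.deriv.continuousOn) (continuousOn_const.mul hga.continuousOn)
      inter_subset_left ((dense_compl_singleton 0).open_subset_closure_inter isOpen_ball)
  have hdiff : ∀ j : ℕ, EqOn (fun z => z * iteratedDeriv (j + 1) g z)
      (fun z => (c - j) * iteratedDeriv j g z) (ball 0 R) := by
    intro j
    induction j with
    | zero => simpa [iteratedDeriv_one] using heuler₀
    | succ j ih =>
      intro z hz
      have hd := ih.deriv isOpen_ball hz
      have hd₁ := (hiter (j + 1) z hz).differentiableAt
      have hd₀ := (hiter j z hz).differentiableAt
      rw [deriv_fun_mul differentiableAt_fun_id hd₁, deriv_const_mul _ hd₀, deriv_id'',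
        ← iteratedDeriv_succ, ← iteratedDeriv_succ] at hd
      push_cast
      linear_combination hd
  have h0 := hdiff k (mem_ball_self hR)
  simp only [zero_mul] at h0
  exact (mul_eq_zero.mp h0.symm).resolve_left (sub_ne_zero.mpr hk)

theorem eqOn_zero_of_euler {g : ℂ → ℂ} {R : ℝ} {c : ℂ} (hc : ∀ k : ℕ, c ≠ k)
    (hg : DifferentiableOn ℂ g (ball 0 R))
    (heuler : ∀ z ∈ ball (0 : ℂ) R, z ≠ 0 → z * deriv g z = c * g z) :
    EqOn g 0 (ball 0 R) := by
  intro z hz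
  have hcoeff : ∀ k, iteratedDeriv k g 0 = 0 :=
    fun k => iteratedDeriv_eq_zero_of_euler (pos_of_mem_ball hz) hg heuler (hc k)
  have hs := Complex.hasSum_taylorSeries_on_ball hg hz
  simp only [hcoeff, smul_zero] at hs
  exact hs.unique hasSum_zero

theorem eq_apply_zero_of_deriv_eq_zero {g : ℂ → ℂ} {R : ℝ}
    (hg : DifferentiableOn ℂ g (ball 0 R)) (hderiv : ∀ z ∈ ball (0 : ℂ) R, z ≠ 0 → deriv g z = 0)
    {z : ℂ} (hz : z ∈ ball 0 R) : g z = g 0 := by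
  have hR := pos_of_mem_ball hz
  have hterm : ∀ k ≠ 0, (k.factorial : ℂ)⁻¹ • (z - 0) ^ k • iteratedDeriv k g 0 = 0 := by
    intro k hk
    rw [iteratedDeriv_eq_zero_of_euler (c := 0) hR hg (fun z hz hz0 => by simp [hderiv z hz hz0])
      (by exact_mod_cast hk.symm), smul_zero, smul_zero]
  simpa using (Complex.hasSum_taylorSeries_on_ball hg hz).unique (hasSum_single 0 hterm)

section Polydisc

variable {ι : Type*} [Fintype ι] [DecidableEq ι] {r : ℝ} {h : (ι → ℂ) → ℂ}

theorem hasDerivAt_comp_update (hh : DifferentiableOn ℂ h (ball 0 r)) {x : ι → ℂ}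
    (hx : x ∈ ball 0 r) (s : ι) {z : ℂ} (hz : z ∈ ball 0 r) :
    HasDerivAt (h ∘ update x s) (fderiv ℂ h (update x s z) (Pi.single s 1)) z :=
  (hh.differentiableAt (isOpen_ball.mem_nhds (update_mem_ball_pi hx hz))).hasFDerivAt
    |>.comp_hasDerivAt z (hasDerivAt_update x s z)

theorem eqOn_zero_of_euler_pde {s : ι} {c : ℂ} (hc : ∀ k : ℕ, c ≠ k)
    (hh : DifferentiableOn ℂ h (ball 0 r))
    (hpde : ∀ x ∈ ball 0 r, (∀ t, x t ≠ 0) → x s * fderiv ℂ h x (Pi.single s 1) = c * h x) :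
    EqOn h 0 (ball 0 r) := by
  refine EqOn.of_subset_closure ?_ hh.continuousOn continuousOn_const inter_subset_left
    (dense_setOf_forall_ne_zero.open_subset_closure_inter isOpen_ball)
  rintro x ⟨hx, hx0⟩
  have hline : EqOn (h ∘ update x s) 0 (ball 0 r) := by
    refine eqOn_zero_of_euler hc
      (fun z hz => (hasDerivAt_comp_update hh hx s hz).differentiableAt.differentiableWithinAt)
      fun z hz hz0 => ?_
    rw [(hasDerivAt_comp_update hh hx s hz).deriv]
    simpa using hpde _ (update_mem_ball_pi hx hz) (update_mem_setOf_forall_ne_zero hx0 s hz0)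
  simpa using hline (mem_ball.2 ((dist_le_pi_dist x 0 s).trans_lt hx))

theorem apply_update_eq_of_fderiv_eq_zero {s : ι} (hh : DifferentiableOn ℂ h (ball 0 r))
    (hpde : ∀ x ∈ ball 0 r, (∀ t, x t ≠ 0) → fderiv ℂ h x (Pi.single s 1) = 0) {z : ℂ}
    (hz : z ∈ ball 0 r) : EqOn (fun x => h (update x s z)) h (ball 0 r) := by
  refine EqOn.of_subset_closure ?_
    (hh.continuousOn.comp (continuous_id.update s continuous_const).continuousOn
      fun x hx => update_mem_ball_pi hx hz)
    hh.continuousOn inter_subset_left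
    (dense_setOf_forall_ne_zero.open_subset_closure_inter isOpen_ball)
  rintro x ⟨hx, hx0⟩
  have hline : ∀ w ∈ ball (0 : ℂ) r, h (update x s w) = h (update x s 0) := by
    intro w hw
    refine eq_apply_zero_of_deriv_eq_zero (g := h ∘ update x s)
      (fun v hv => (hasDerivAt_comp_update hh hx s hv).differentiableAt.differentiableWithinAt)
      (fun v hv hv0 => ?_) hw
    rw [(hasDerivAt_comp_update hh hx s hv).deriv]
    exact hpde _ (update_mem_ball_pi hx hv) (update_mem_setOf_forall_ne_zero hx0 s hv0)
  have hxs : x s ∈ ball (0 : ℂ) r := mem_ball.2 ((dist_le_pi_dist x 0 s).trans_lt hx)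
  simpa using (hline z hz).trans (hline (x s) hxs).symm

theorem eq_apply_zero_of_fderiv_eq_zero (hh : DifferentiableOn ℂ h (ball 0 r))
    (hpde : ∀ s, ∀ x ∈ ball 0 r, (∀ t, x t ≠ 0) → fderiv ℂ h x (Pi.single s 1) = 0)
    {x : ι → ℂ} (hx : x ∈ ball 0 r) : h x = h 0 := by
  refine isOpen_ball.is_const_of_fderiv_eq_zero isPreconnected_ball hh (fun y hy => ?_) hx
    (mem_ball_self (pos_of_mem_ball hx))
  have hpartial : ∀ s, fderiv ℂ h y (Pi.single s 1) = 0 := by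
    intro s
    have hys : y s ∈ ball (0 : ℂ) r := mem_ball.2 ((dist_le_pi_dist y 0 s).trans_lt hy)
    have hconst : h ∘ update y s =ᶠ[𝓝 (y s)] fun _ => h y :=
      eventually_of_mem (isOpen_ball.mem_nhds hys)
        fun w hw => apply_update_eq_of_fderiv_eq_zero hh (hpde s) hw hy
    simpa using (hasDerivAt_comp_update hh hy s hys).unique
      ((hasDerivAt_const (y s) (h y)).congr_of_eventuallyEq hconst)
  refine ContinuousLinearMap.coe_injective (LinearMap.pi_ext fun s w => ?_)
  have hsingle : Pi.single s w = w • Pi.single s (1 : ℂ) := by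
    rw [← Pi.single_smul, smul_eq_mul, mul_one]
  simp [hsingle, hpartial s]

end Polydisc

theorem euler_pde_of_gauge {n m : ℕ} {a : Fin n → Fin m → ℂ} {Ω₀ : MForm n m 1}
    (hΩ₀ : ∀ p q x, ∀ idx : Fin 1 → Fin m,
      Ω₀ p q x idx = if p = q then a p (idx 0) / x (idx 0) else 0)
    {H : Pt m → Matrix (Fin n) (Fin n) ℂ} {x : Pt m}
    (hgauge : ∀ p q, ∀ idx : Fin 1 → Fin m,
      MForm.d (MForm.ofFun H) p q x idx =
        MForm.wedge Ω₀ (MForm.ofFun H) p q x idx - MForm.wedge (MForm.ofFun H) Ω₀ p q x idx)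
    (p q : Fin n) {s : Fin m} (hs : x s ≠ 0) :
    x s * fderiv ℂ (fun y => H y p q) x (Pi.single s 1) = (a p s - a q s) * H x p q := by
  have h : fderiv ℂ (fun y => H y p q) x (Pi.single s 1) =
      a p s / x s * H x p q - H x p q * (a q s / x s) := by
    simpa [MForm.d, MForm.ofFun, MForm.wedge, Form.d, Form.wedge, hΩ₀] using hgauge p q fun _ => s
  rw [h]
  field_simp [hs]

/-- for a non-resonant diagonal Euler form
`Ω₀ = diag(α₁,…,α_n)`, `αᵢ = Σ_s aᵢ^s dt_s/t_s` (i.e. `aᵢ − aⱼ ∉ ℤ^m` for `i ≠ j`),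
every holomorphic gauge transformation `H` conjugating `Ω₀` to itself
(`dH = Ω₀H − HΩ₀`) is a constant diagonal matrix; in particular the normalizing
transform with `H(0) = E` is the identity. -/
theorem stmt19 (n m : ℕ) (r : ℝ) (hr : 0 < r)
    (a : Fin n → Fin m → ℂ)
    (hres : ∀ i j : Fin n, i ≠ j → ¬ ∃ z : Fin m → ℤ, ∀ s, a i s - a j s = (z s : ℂ))
    (Ω₀ : MForm n m 1)
    (hΩ₀ : ∀ p q x, ∀ idx : Fin 1 → Fin m,
      Ω₀ p q x idx = if p = q then a p (idx 0) / x (idx 0) else 0)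
    (H : Pt m → Matrix (Fin n) (Fin n) ℂ)
    (hH : ∀ p q, DifferentiableOn ℂ (fun x => H x p q) (Metric.ball (0 : Pt m) r))
    (hgauge : ∀ x ∈ Metric.ball (0 : Pt m) r, (∀ s, x s ≠ 0) →
      ∀ p q, ∀ idx : Fin 1 → Fin m,
        MForm.d (MForm.ofFun H) p q x idx =
          MForm.wedge Ω₀ (MForm.ofFun H) p q x idx -
            MForm.wedge (MForm.ofFun H) Ω₀ p q x idx) :
    (∃ C : Matrix (Fin n) (Fin n) ℂ, (∀ p q, p ≠ q → C p q = 0) ∧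
        ∀ x ∈ Metric.ball (0 : Pt m) r, H x = C) ∧
      (H 0 = 1 → ∀ x ∈ Metric.ball (0 : Pt m) r, H x = 1) := by
  have hpde : ∀ p q, ∀ x ∈ ball (0 : Pt m) r, (∀ s, x s ≠ 0) → ∀ s,
      x s * fderiv ℂ (fun y => H y p q) x (Pi.single s 1) = (a p s - a q s) * H x p q :=
    fun p q x hx hx0 s => euler_pde_of_gauge hΩ₀ (hgauge x hx hx0) p q (hx0 s)
  have hoff : ∀ p q, p ≠ q → EqOn (fun x => H x p q) 0 (ball 0 r) := by
    intro p q hpq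
    obtain ⟨s, hs⟩ : ∃ s, ∀ k : ℕ, a p s - a q s ≠ k := by
      by_contra! hint
      choose k hk using hint
      exact hres p q hpq ⟨fun s => k s, by simpa using hk⟩
    exact eqOn_zero_of_euler_pde hs (hH p q) fun x hx hx0 => hpde p q x hx hx0 s
  have hdiag : ∀ p, ∀ x ∈ ball (0 : Pt m) r, H x p p = H 0 p p := fun p x hx =>
    eq_apply_zero_of_fderiv_eq_zero (hH p p)
      (fun s y hy hy0 => by simpa [hy0 s] using hpde p p y hy hy0 s) hx
  have hconst : ∀ x ∈ ball (0 : Pt m) r, H x = H 0 := by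
    intro x hx
    ext p q
    rcases eq_or_ne p q with rfl | hpq
    · exact hdiag p x hx
    · exact (hoff p q hpq hx).trans (hoff p q hpq (mem_ball_self hr)).symm
  exact ⟨⟨H 0, fun p q hpq => hoff p q hpq (mem_ball_self hr), hconst⟩,
    fun hH0 x hx => (hconst x hx).trans hH0⟩
end
end
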